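/- For 1 < q < 5/3, μ_q ∈ ℝ, σ_q > 0, the function x ↦ (x-μ_q)²·p_q(x) is Lebesgue integrable on ℝ and ∫_{-∞}^{∞} (x-μ_q)²·p_q(x) dx = ((3-q)/(5-3q))·σ_q²; i.e., the (ordinary) variance of the univariate q-Gaussian equals ((3-q)/(5-3q))·σ_q². -/

import Mathlib

open MeasureTheory

/-- The Euler Beta function `B(a,b) = ∫₀¹ t^(a-1) (1-t)^(b-1) dt`. -/
noncomputable def Beta (a b : ℝ) : ℝ := ∫ t in (0:ℝ)..1, t ^ (a - 1) * (1 - t) ^ (b - 1)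

/-- Normalization constant of the univariate q-Gaussian:
`Z_q = (σ_q²·(3-q)/(q-1))^(1/2) · B(1/2, (3-q)/(2(q-1)))`. -/
noncomputable def Zq (q σq : ℝ) : ℝ :=
  (σq ^ 2 * (3 - q) / (q - 1)) ^ ((1 : ℝ) / 2) * Beta (1 / 2) ((3 - q) / (2 * (q - 1)))

/-- The univariate q-Gaussian density
`p_q(x) = (1/Z_q)·(1 - ((1-q)/(3-q))·(x-μ_q)²/σ_q²)^(1/(1-q))`. -/
noncomputable def pq (q μq σq x : ℝ) : ℝ :=
  (1 / Zq q σq) * (1 - ((1 - q) / (3 - q)) * (x - μq) ^ 2 / σq ^ 2) ^ (1 / (1 - q))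

/-!
With `s² = σ_q²(3-q)/(q-1)` and `p = 1/(q-1)`, the q-Gaussian is the Student-type density
`(1 + ((x-μ_q)/s)²)^(-p) / Z_q` with `Z_q = s·B(1/2, p-1/2)`, so after `t = (x-μ_q)/s` the
variance is `s³/Z_q · ∫ t²(1+t²)^(-p) dt`. The substitution `u = t²/(1+t²)` gives
`∫₀^∞ t^(2a-1)(1+t²)^(-(a+b)) dt = B(a,b)/2`, hence `∫ t²(1+t²)^(-p) dt = B(3/2, p-3/2)`,
which the Beta recurrence turns into `B(1/2, p-1/2)/(2p-3)`. The variance is therefore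
`s²/(2p-3) = σ_q²(3-q)/(5-3q)`; since the integral is nonzero, the integrand is integrable.
-/

open Set Real

lemma ofReal_Beta (a b : ℝ) : (Beta a b : ℂ) = Complex.betaIntegral a b := by
  rw [Beta, Complex.betaIntegral, ← intervalIntegral.integral_ofReal]
  refine intervalIntegral.integral_congr fun x hx => ?_
  rw [uIcc_of_le zero_le_one] at hx
  push_cast
  rw [Complex.ofReal_cpow hx.1, ← Complex.ofReal_one, ← Complex.ofReal_sub,
    Complex.ofReal_cpow (sub_nonneg.2 hx.2)]
  push_cast
  ring_nf

lemma Beta_eq_beta {a b : ℝ} (ha : 0 < a) (hb : 0 < b) :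
    Beta a b = ProbabilityTheory.beta a b := by
  rw [ProbabilityTheory.beta_eq_betaIntegralReal a b ha hb, ← ofReal_Beta, Complex.ofReal_re]

lemma Beta_pos {a b : ℝ} (ha : 0 < a) (hb : 0 < b) : 0 < Beta a b :=
  Beta_eq_beta ha hb ▸ ProbabilityTheory.beta_pos ha hb

lemma Beta_recurrence {a b : ℝ} (ha : 0 < a) (hb : 0 < b) :
    a * Beta a (b + 1) = b * Beta (a + 1) b := by
  have h := Complex.betaIntegral_recurrence (u := a) (v := b) (by simpa) (by simpa)
  rw [← Complex.ofReal_one, ← Complex.ofReal_add, ← Complex.ofReal_add, ← ofReal_Beta,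
    ← ofReal_Beta] at h
  exact_mod_cast h

lemma Beta_eq_integral_Ioo (a b : ℝ) :
    Beta a b = ∫ u in Ioo (0 : ℝ) 1, u ^ (a - 1) * (1 - u) ^ (b - 1) := by
  rw [Beta, intervalIntegral.integral_of_le zero_le_one, integral_Ioc_eq_integral_Ioo]

lemma hasDerivAt_sq_div_one_add_sq (t : ℝ) :
    HasDerivAt (fun t : ℝ => t ^ 2 / (1 + t ^ 2)) (2 * t / (1 + t ^ 2) ^ 2) t := by
  refine ((hasDerivAt_pow 2 t).div ((hasDerivAt_pow 2 t).const_add 1)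
    (by positivity)).congr_deriv ?_
  push_cast
  ring

lemma strictMonoOn_sq_div_one_add_sq :
    StrictMonoOn (fun t : ℝ => t ^ 2 / (1 + t ^ 2)) (Ioi 0) := by
  intro s hs t ht hst
  dsimp only
  rw [div_lt_div_iff₀ (by positivity) (by positivity)]
  nlinarith [mul_lt_mul'' hst hst (le_of_lt hs) (le_of_lt hs)]

lemma image_sq_div_one_add_sq : (fun t : ℝ => t ^ 2 / (1 + t ^ 2)) '' Ioi 0 = Ioo 0 1 := by
  ext u
  constructor
  · rintro ⟨t, ht, rfl⟩
    have ht : 0 < t := ht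
    exact ⟨by positivity, (div_lt_one (by positivity)).2 (by linarith)⟩
  · rintro ⟨hu0, hu1⟩
    have h1u : 0 < 1 - u := by linarith
    refine ⟨√(u / (1 - u)), Real.sqrt_pos.2 (by positivity), ?_⟩
    simp only [Real.sq_sqrt (by positivity : 0 ≤ u / (1 - u))]
    field_simp
    ring

-- No hypotheses on `a, b`: the substitution identifies the two integrands up to the Jacobian,
-- so when they fail to be integrable both sides are the junk value `0`.
theorem integral_Ioi_rpow_mul_one_add_sq_rpow_neg (a b : ℝ) :
    ∫ t in Ioi (0 : ℝ), t ^ (2 * a - 1) * (1 + t ^ 2) ^ (-(a + b)) = Beta a b / 2 := by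
  have hsubst := integral_image_eq_integral_abs_deriv_smul measurableSet_Ioi
    (fun t _ => (hasDerivAt_sq_div_one_add_sq t).hasDerivWithinAt)
    strictMonoOn_sq_div_one_add_sq.injOn (fun u : ℝ => u ^ (a - 1) * (1 - u) ^ (b - 1))
  rw [image_sq_div_one_add_sq, ← Beta_eq_integral_Ioo] at hsubst
  rw [hsubst, ← integral_div]
  refine setIntegral_congr_fun measurableSet_Ioi fun t (ht : 0 < t) => ?_
  have hw : 0 < 1 + t ^ 2 := by positivity
  have h1 : 1 - t ^ 2 / (1 + t ^ 2) = (1 + t ^ 2)⁻¹ := by field_simp; ring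
  rw [smul_eq_mul, abs_of_pos (by positivity), h1]
  have ht_pow : t ^ (2 * a - 1) = t * (t ^ 2) ^ (a - 1) := by
    rw [← rpow_natCast, ← rpow_mul ht.le,
      show 2 * a - 1 = 1 + (2 : ℕ) * (a - 1) by push_cast; ring, rpow_add ht, rpow_one]
  have hw_pow : (1 + t ^ 2) ^ (-(a + b))
      = ((1 + t ^ 2) ^ 2 * (1 + t ^ 2) ^ (a - 1) * (1 + t ^ 2) ^ (b - 1))⁻¹ := by
    rw [← rpow_two (1 + t ^ 2), ← rpow_add hw, ← rpow_add hw, rpow_neg hw.le]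
    ring_nf
  rw [ht_pow, hw_pow, div_rpow (by positivity) hw.le, inv_rpow hw.le]
  field_simp

theorem integral_sq_mul_one_add_sq_rpow_neg {p : ℝ} (hp : 3 / 2 < p) :
    ∫ t, t ^ 2 * (1 + t ^ 2) ^ (-p) = Beta (1 / 2) (p - 1 / 2) / (2 * p - 3) := by
  have h_even := integral_comp_abs (f := fun t : ℝ => t ^ 2 * (1 + t ^ 2) ^ (-p))
  have h_half := integral_Ioi_rpow_mul_one_add_sq_rpow_neg (3 / 2) (p - 3 / 2)
  have h_rec := Beta_recurrence (a := 1 / 2) (b := p - 3 / 2) (by norm_num) (by linarith)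
  simp only [sq_abs] at h_even
  norm_num at h_half h_rec
  rw [show p - 3 / 2 + 1 = p - 1 / 2 by ring] at h_rec
  rw [h_even, h_half, eq_div_iff (by linarith)]
  linear_combination (-2) * h_rec

theorem integrable_sq_mul_one_add_sq_rpow_neg {p : ℝ} (hp : 3 / 2 < p) :
    Integrable fun t : ℝ => t ^ 2 * (1 + t ^ 2) ^ (-p) := by
  refine Integrable.of_integral_ne_zero ?_
  rw [integral_sq_mul_one_add_sq_rpow_neg hp]
  exact (div_pos (Beta_pos (by norm_num) (by linarith)) (by linarith)).ne'

lemma Zq_eq_mul_Beta {q σq s : ℝ} (hq : q ≠ 1) (hs : 0 ≤ s)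
    (hs2 : s ^ 2 = σq ^ 2 * (3 - q) / (q - 1)) :
    Zq q σq = s * Beta (1 / 2) (1 / (q - 1) - 1 / 2) := by
  have hq' : q - 1 ≠ 0 := sub_ne_zero.2 hq
  rw [Zq, ← hs2, ← sqrt_eq_rpow, sqrt_sq hs]
  congr 2
  field_simp
  ring

lemma pq_eq_rpow_div_Zq {q μq σq s : ℝ} (hq1 : q ≠ 1) (hq3 : q ≠ 3) (hσ : σq ≠ 0)
    (hs2 : s ^ 2 = σq ^ 2 * (3 - q) / (q - 1)) (x : ℝ) :
    pq q μq σq x = (1 + ((x - μq) / s) ^ 2) ^ (-(1 / (q - 1))) / Zq q σq := by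
  have hq1' : q - 1 ≠ 0 := sub_ne_zero.2 hq1
  have hq3' : 3 - q ≠ 0 := sub_ne_zero.2 hq3.symm
  have hbase : 1 - (1 - q) / (3 - q) * (x - μq) ^ 2 / σq ^ 2 = 1 + ((x - μq) / s) ^ 2 := by
    rw [div_pow, hs2]
    field_simp
    ring
  rw [pq, hbase, one_div_mul_eq_div, ← one_div_neg_eq_neg_one_div, neg_sub]

/-- For `1 < q < 5/3`, `x ↦ (x-μ_q)²·p_q(x)` is Lebesgue integrable and
`∫ (x-μ_q)²·p_q(x) dx = ((3-q)/(5-3q))·σ_q²`: the ordinary variance of the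
univariate q-Gaussian equals `((3-q)/(5-3q))·σ_q²`. -/
theorem qGaussian_variance (q μq σq : ℝ) (hq1 : 1 < q) (hq2 : q < 5 / 3) (hσ : 0 < σq) :
    Integrable (fun x : ℝ => (x - μq) ^ 2 * pq q μq σq x) ∧
    (∫ x : ℝ, (x - μq) ^ 2 * pq q μq σq x) = ((3 - q) / (5 - 3 * q)) * σq ^ 2 := by
  obtain ⟨s, hs, hs2⟩ : ∃ s, 0 < s ∧ s ^ 2 = σq ^ 2 * (3 - q) / (q - 1) :=
    ⟨√(σq ^ 2 * (3 - q) / (q - 1)), sqrt_pos.2 (by apply div_pos <;> nlinarith),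
      sq_sqrt (by apply div_nonneg <;> nlinarith)⟩
  have hq1' : q - 1 ≠ 0 := (sub_pos.2 hq1).ne'
  set p := 1 / (q - 1) with hp_def
  have hp : 3 / 2 < p := by rw [hp_def, lt_div_iff₀ (by linarith)]; linarith
  have hZ : Zq q σq = s * Beta (1 / 2) (p - 1 / 2) := Zq_eq_mul_Beta hq1.ne' hs.le hs2
  have hB : 0 < Beta (1 / 2) (p - 1 / 2) := Beta_pos (by norm_num) (by linarith)
  have h2p : 2 * p - 3 = (5 - 3 * q) / (q - 1) := by rw [hp_def]; field_simp; ring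
  set g : ℝ → ℝ := fun t => t ^ 2 * (1 + t ^ 2) ^ (-p)
  have h_density : (fun x => (x - μq) ^ 2 * pq q μq σq x)
      = fun x => s ^ 2 / Zq q σq * g ((x - μq) / s) := by
    funext x
    simp only [g]
    rw [pq_eq_rpow_div_Zq hq1.ne' (by linarith) hσ.ne' hs2]
    generalize (1 + ((x - μq) / s) ^ 2) ^ (-p) = w
    field_simp
  refine ⟨?_, ?_⟩
  · rw [h_density]
    exact (((integrable_sq_mul_one_add_sq_rpow_neg hp).comp_div hs.ne').comp_sub_right
      μq).const_mul _
  · rw [h_density, integral_const_mul, integral_sub_right_eq_self (fun x => g (x / s)),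
      Measure.integral_comp_div, integral_sq_mul_one_add_sq_rpow_neg hp, hZ, abs_of_pos hs,
      smul_eq_mul, h2p, hs2]
    generalize Beta (1 / 2) (p - 1 / 2) = B at hB ⊢
    field_simp
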